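/- arXiv:2405.19834 — 3 statements merged into one kernel-verified Lean document; each statement's English description precedes it below -/
import Mathlib

section
/- Let s, z be vectors in a real inner product space with s ≠ 0, z ≠ 0, and ρ := zᵀs > 0. Then τᵍ := ‖z‖/‖s‖ is the unique minimizer over τ > 0 of the function τ ↦ ‖√τ·s − z/√τ‖. -/
open RealInnerProductSpace

lemma key_sq {X : Type*} [NormedAddCommGroup X] [InnerProductSpace ℝ X]
    (s z : X) {τ : ℝ} (hτ : 0 < τ) :
    ‖Real.sqrt τ • s - (Real.sqrt τ)⁻¹ • z‖ ^ 2 =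
      τ * ‖s‖ ^ 2 + ‖z‖ ^ 2 / τ - 2 * ⟪z, s⟫ := by
  have hst : (0:ℝ) < Real.sqrt τ := Real.sqrt_pos.mpr hτ
  have hsq : Real.sqrt τ * Real.sqrt τ = τ := Real.mul_self_sqrt hτ.le
  rw [@norm_sub_sq_real, norm_smul, norm_smul, inner_smul_left, inner_smul_right]
  rw [real_inner_comm s z]
  simp only [Real.norm_eq_abs, abs_of_pos hst, abs_of_pos (inv_pos.mpr hst),
    RCLike.conj_to_real]
  field_simp
  ring_nf
  rw [Real.sq_sqrt hτ.le]
  rw [show Real.sqrt τ ^ 4 = τ ^ 2 by rw [show (4:ℕ) = 2*2 from rfl, pow_mul, Real.sq_sqrt hτ.le]]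
  ring

theorem stmt2 {X : Type*} [NormedAddCommGroup X] [InnerProductSpace ℝ X]
    (s z : X) (hs : s ≠ 0) (hz : z ≠ 0) (hρ : 0 < ⟪z, s⟫) :
    (∀ τ : ℝ, 0 < τ →
        ‖Real.sqrt (‖z‖ / ‖s‖) • s - (Real.sqrt (‖z‖ / ‖s‖))⁻¹ • z‖ ≤
          ‖Real.sqrt τ • s - (Real.sqrt τ)⁻¹ • z‖) ∧
      (∀ τ : ℝ, 0 < τ →
        ‖Real.sqrt τ • s - (Real.sqrt τ)⁻¹ • z‖ =
          ‖Real.sqrt (‖z‖ / ‖s‖) • s - (Real.sqrt (‖z‖ / ‖s‖))⁻¹ • z‖ →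
        τ = ‖z‖ / ‖s‖) := by
  have hsn : (0:ℝ) < ‖s‖ := norm_pos_iff.mpr hs
  have hzn : (0:ℝ) < ‖z‖ := norm_pos_iff.mpr hz
  have hg : (0:ℝ) < ‖z‖ / ‖s‖ := div_pos hzn hsn
  have hgsq := key_sq s z hg
  have hgval : (‖z‖ / ‖s‖) * ‖s‖ ^ 2 + ‖z‖ ^ 2 / (‖z‖ / ‖s‖) - 2 * ⟪z, s⟫
      = 2 * (‖z‖ * ‖s‖) - 2 * ⟪z, s⟫ := by
    field_simp
    ring
  have hdiff : ∀ τ : ℝ, 0 < τ →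
      ‖Real.sqrt τ • s - (Real.sqrt τ)⁻¹ • z‖ ^ 2
        - ‖Real.sqrt (‖z‖ / ‖s‖) • s - (Real.sqrt (‖z‖ / ‖s‖))⁻¹ • z‖ ^ 2
      = (Real.sqrt τ * ‖s‖ - ‖z‖ / Real.sqrt τ) ^ 2 := by
    intro τ hτ
    have hst : (0:ℝ) < Real.sqrt τ := Real.sqrt_pos.mpr hτ
    have hsq : Real.sqrt τ * Real.sqrt τ = τ := Real.mul_self_sqrt hτ.le
    rw [key_sq s z hτ, hgsq, hgval]
    field_simp
    ring_nf
    have h4 : Real.sqrt τ ^ 4 = τ ^ 2 := by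
      rw [show (4:ℕ) = 2*2 from rfl, pow_mul, Real.sq_sqrt hτ.le]
    rw [h4, Real.sq_sqrt hτ.le]
    ring
  constructor
  · intro τ hτ
    have h := hdiff τ hτ
    have h2 : ‖Real.sqrt (‖z‖ / ‖s‖) • s - (Real.sqrt (‖z‖ / ‖s‖))⁻¹ • z‖ ^ 2 ≤
        ‖Real.sqrt τ • s - (Real.sqrt τ)⁻¹ • z‖ ^ 2 := by nlinarith [sq_nonneg (Real.sqrt τ * ‖s‖ - ‖z‖ / Real.sqrt τ)]
    exact (pow_le_pow_iff_left₀ (norm_nonneg _) (norm_nonneg _) two_ne_zero).mp h2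
  · intro τ hτ heq
    have h := hdiff τ hτ
    rw [heq] at h
    have hzero : (Real.sqrt τ * ‖s‖ - ‖z‖ / Real.sqrt τ) ^ 2 = 0 := by linarith
    have hst : (0:ℝ) < Real.sqrt τ := Real.sqrt_pos.mpr hτ
    have hsq : Real.sqrt τ * Real.sqrt τ = τ := Real.mul_self_sqrt hτ.le
    have h3 : Real.sqrt τ * ‖s‖ - ‖z‖ / Real.sqrt τ = 0 := by
      exact pow_eq_zero_iff (by norm_num) |>.mp hzero
    have h4 : Real.sqrt τ * ‖s‖ * Real.sqrt τ = ‖z‖ := by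
      field_simp at h3
      linarith
    rw [eq_div_iff hsn.ne']
    nlinarith [hsq]
end

section
/- Let H̄ be a symmetric positive semi-definite bounded operator on a real Hilbert space X, let s ∈ X with s ≠ 0 and z := H̄ s satisfy zᵀs > 0. Let (eⱼ)_{j∈I} be an orthonormal basis and set τˢ := zᵀs/‖s‖², τᶻ := ‖z‖²/(zᵀs), and T̂ := [τˢ, τᶻ] with projection P̂. Define the diagonal operator D := Σⱼ γⱼ eⱼeⱼᵀ where γⱼ := P̂(zᵀeⱼ / sᵀeⱼ) when sᵀeⱼ ≠ 0 and γⱼ ∈ T̂ otherwise. Then λ(H̄) ≤ λ(D) ≤ Λ(D) ≤ Λ(H̄). -/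
open RealInnerProductSpace

theorem stmt10 {X : Type*} [NormedAddCommGroup X] [InnerProductSpace ℝ X]
    [CompleteSpace X] {ι : Type*}
    (H : X →L[ℝ] X)
    (hsym : ∀ u v : X, ⟪H u, v⟫ = ⟪u, H v⟫)
    (hpsd : ∀ v : X, 0 ≤ ⟪v, H v⟫)
    (s : X) (hs : s ≠ 0) (hρ : 0 < ⟪H s, s⟫)
    (e : HilbertBasis ι ℝ X) (γ : ι → ℝ)
    (τs τz : ℝ) (hτs : τs = ⟪H s, s⟫ / ‖s‖ ^ 2)
    (hτz : τz = ‖H s‖ ^ 2 / ⟪H s, s⟫)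
    (h1 : ∀ j, ⟪s, e j⟫ ≠ 0 →
      γ j = min τz (max τs (⟪H s, e j⟫ / ⟪s, e j⟫)))
    (h2 : ∀ j, ⟪s, e j⟫ = 0 → γ j ∈ Set.Icc τs τz)
    (D : X →L[ℝ] X)
    (hD : ∀ x : X, D x = ∑' j, (γ j * ⟪e j, x⟫) • e j) :
    sInf {r : ℝ | ∃ v : X, ‖v‖ = 1 ∧ r = ⟪v, H v⟫} ≤
        sInf {r : ℝ | ∃ v : X, ‖v‖ = 1 ∧ r = ⟪v, D v⟫} ∧
      sInf {r : ℝ | ∃ v : X, ‖v‖ = 1 ∧ r = ⟪v, D v⟫} ≤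
        sSup {r : ℝ | ∃ v : X, ‖v‖ = 1 ∧ r = ⟪v, D v⟫} ∧
      sSup {r : ℝ | ∃ v : X, ‖v‖ = 1 ∧ r = ⟪v, D v⟫} ≤
        sSup {r : ℝ | ∃ v : X, ‖v‖ = 1 ∧ r = ⟪v, H v⟫} := by
  have hsn : (0:ℝ) < ‖s‖ := norm_pos_iff.mpr hs
  have hs2 : (0:ℝ) < ‖s‖ ^ 2 := by positivity
  have hτs_pos : 0 < τs := by rw [hτs]; positivity
  have hHs : H s ≠ 0 := by
    intro h; rw [h] at hρ; simp at hρ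
  have hHsn : (0:ℝ) < ‖H s‖ := norm_pos_iff.mpr hHs
  have hHs2 : (0:ℝ) < ‖H s‖ ^ 2 := by positivity
  have hτsτz : τs ≤ τz := by
    rw [hτs, hτz, div_le_div_iff₀ hs2 hρ]
    have h := real_inner_mul_inner_self_le (H s) s
    rw [real_inner_self_eq_norm_sq, real_inner_self_eq_norm_sq] at h
    nlinarith [h]
  have hγ : ∀ j, γ j ∈ Set.Icc τs τz := by
    intro j
    by_cases hc : ⟪s, e j⟫ = 0
    · exact h2 j hc
    · rw [h1 j hc]
      exact ⟨le_min hτsτz (le_max_left _ _), min_le_left _ _⟩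
  -- key: quadratic form of D lies in [τs, τz] on unit vectors
  have key : ∀ v : X, ‖v‖ = 1 → τs ≤ ⟪v, D v⟫ ∧ ⟪v, D v⟫ ≤ τz := by
    intro v hv
    have hb : HasSum (fun j => ⟪e j, v⟫ * ⟪e j, v⟫) 1 := by
      have h := e.hasSum_inner_mul_inner v v
      rw [real_inner_self_eq_norm_sq, hv, one_pow] at h
      refine h.congr_fun fun j => ?_
      rw [real_inner_comm v (e j)]
    have hanneg : ∀ j, 0 ≤ ⟪e j, v⟫ * ⟪e j, v⟫ := fun j => mul_self_nonneg _
    have hmem : Memℓp (fun j => γ j * ⟪e j, v⟫) 2 := by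
      apply memℓp_gen
      have hsq : Summable (fun j => τz ^ 2 * (⟪e j, v⟫ * ⟪e j, v⟫)) :=
        hb.summable.mul_left _
      refine Summable.of_nonneg_of_le (fun j => ?_) (fun j => ?_) hsq
      · positivity
      · have ht : ((2:ENNReal)).toReal = (2:ℝ) := by simp
        rw [ht]
        rw [show ‖γ j * ⟪e j, v⟫‖ ^ (2:ℝ) = ‖γ j * ⟪e j, v⟫‖ ^ (2:ℕ) by
          rw [← Real.rpow_natCast]; norm_num]
        have hj := hγ j
        have h1' : τs ≤ γ j := hj.1
        have h2' : γ j ≤ τz := hj.2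
        have : ‖γ j * ⟪e j, v⟫‖ ^ 2 = (γ j)^2 * (⟪e j, v⟫ * ⟪e j, v⟫) := by
          rw [norm_mul, mul_pow]; simp [sq, Real.norm_eq_abs, abs_mul_abs_self]
        rw [this]
        have : (γ j)^2 ≤ τz^2 := by nlinarith
        nlinarith [hanneg j, this]
    have hhs : HasSum (fun j => (γ j * ⟪e j, v⟫) • e j)
        (e.repr.symm (⟨fun j => γ j * ⟪e j, v⟫, hmem⟩ : lp (fun _ : ι => ℝ) 2)) := by
      exact e.hasSum_repr_symm (⟨fun j => γ j * ⟪e j, v⟫, hmem⟩ : lp (fun _ : ι => ℝ) 2)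
    have hDv : HasSum (fun j => γ j * ⟪e j, v⟫ * ⟪e j, v⟫) ⟪v, D v⟫ := by
      have h := hhs.mapL (innerSL ℝ v)
      rw [hD v, hhs.tsum_eq]
      refine h.congr_fun fun j => ?_
      simp only [innerSL_apply_apply, real_inner_smul_right]
      rw [real_inner_comm v (e j)]
    constructor
    · have hls : HasSum (fun j => τs * (⟪e j, v⟫ * ⟪e j, v⟫)) τs := by
        simpa using hb.mul_left τs
      refine hasSum_le (fun j => ?_) hls hDv
      have := (hγ j).1
      have := hanneg j
      nlinarith
    · have hls : HasSum (fun j => τz * (⟪e j, v⟫ * ⟪e j, v⟫)) τz := by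
        simpa using hb.mul_left τz
      refine hasSum_le (fun j => ?_) hDv hls
      have := (hγ j).2
      have := hanneg j
      nlinarith
  -- τs is attained for H at s/‖s‖
  have hτs_mem : τs ∈ {r : ℝ | ∃ v : X, ‖v‖ = 1 ∧ r = ⟪v, H v⟫} := by
    refine ⟨‖s‖⁻¹ • s, ?_, ?_⟩
    · rw [norm_smul]; simp [hsn.ne']
    · rw [map_smul, real_inner_smul_left, real_inner_smul_right, hτs,
        real_inner_comm (H s) s, sq]
      field_simp
  -- a unit vector whose Rayleigh quotient for H dominates τz
  have hτz_le : ∃ r ∈ {r : ℝ | ∃ v : X, ‖v‖ = 1 ∧ r = ⟪v, H v⟫}, τz ≤ r := by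
    have expand : ∀ t : ℝ, 0 ≤ ⟪H s, s⟫ - 2*t*‖H s‖^2 + t^2 * ⟪H s, H (H s)⟫ := by
      intro t
      have h0 := hpsd (s - t • H s)
      have hst : ⟪s, H (H s)⟫ = ‖H s‖^2 := by
        rw [← hsym s (H s), real_inner_self_eq_norm_sq]
      have hes : ⟪H s, s⟫ = ⟪s, H s⟫ := real_inner_comm _ _
      rw [map_sub, map_smul, inner_sub_left, inner_sub_right, inner_sub_right,
        real_inner_smul_left, real_inner_smul_left, real_inner_smul_right,
        real_inner_smul_right] at h0
      have h3 : ⟪H s, H s⟫ = ‖H s‖^2 := real_inner_self_eq_norm_sq _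
      rw [hst, h3] at h0
      rw [hes]
      nlinarith [h0]
    have hcnn : 0 ≤ ⟪H s, H (H s)⟫ := hpsd (H s)
    have keyCS : ‖H s‖^2 * ‖H s‖^2 ≤ ⟪H s, s⟫ * ⟪H s, H (H s)⟫ := by
      have hq : ∀ t : ℝ, 0 ≤ ⟪H s, H (H s)⟫ * (t*t) + -(2*‖H s‖^2) * t + ⟪H s, s⟫ := by
        intro t
        have h := expand t
        nlinarith [h]
      have hd := discrim_le_zero hq
      rw [discrim] at hd
      nlinarith [hd]
    refine ⟨⟪‖H s‖⁻¹ • H s, H (‖H s‖⁻¹ • H s)⟫, ⟨‖H s‖⁻¹ • H s, ?_, rfl⟩, ?_⟩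
    · rw [norm_smul]; simp [hHsn.ne']
    · rw [map_smul, real_inner_smul_left, real_inner_smul_right, hτz]
      rw [div_le_iff₀ hρ]
      have : ‖H s‖⁻¹ * (‖H s‖⁻¹ * ⟪H s, H (H s)⟫) = ⟪H s, H (H s)⟫ / ‖H s‖^2 := by
        rw [sq, div_eq_mul_inv, mul_inv]; ring
      rw [this, div_mul_eq_mul_div, le_div_iff₀ hHs2]
      nlinarith [keyCS]
  -- set up boundedness facts
  obtain ⟨rz, hrz_mem, hrz⟩ := hτz_le
  have hbddH : BddAbove {r : ℝ | ∃ v : X, ‖v‖ = 1 ∧ r = ⟪v, H v⟫} := by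
    refine ⟨‖H‖, fun r hr => ?_⟩
    obtain ⟨v, hv, rfl⟩ := hr
    calc ⟪v, H v⟫ ≤ ‖v‖ * ‖H v‖ := real_inner_le_norm _ _
      _ ≤ ‖v‖ * (‖H‖ * ‖v‖) := by
          exact mul_le_mul_of_nonneg_left (H.le_opNorm v) (norm_nonneg v)
      _ = ‖H‖ := by rw [hv]; ring
  have hbddHb : BddBelow {r : ℝ | ∃ v : X, ‖v‖ = 1 ∧ r = ⟪v, H v⟫} := by
    refine ⟨0, fun r hr => ?_⟩
    obtain ⟨v, hv, rfl⟩ := hr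
    exact hpsd v
  have hDne : {r : ℝ | ∃ v : X, ‖v‖ = 1 ∧ r = ⟪v, D v⟫}.Nonempty := by
    refine ⟨⟪‖s‖⁻¹ • s, D (‖s‖⁻¹ • s)⟫, ‖s‖⁻¹ • s, ?_, rfl⟩
    rw [norm_smul]; simp [hsn.ne']
  have hDlow : ∀ r ∈ {r : ℝ | ∃ v : X, ‖v‖ = 1 ∧ r = ⟪v, D v⟫}, τs ≤ r := by
    rintro r ⟨v, hv, rfl⟩
    exact (key v hv).1
  have hDhigh : ∀ r ∈ {r : ℝ | ∃ v : X, ‖v‖ = 1 ∧ r = ⟪v, D v⟫}, r ≤ τz := by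
    rintro r ⟨v, hv, rfl⟩
    exact (key v hv).2
  have hbddDb : BddBelow {r : ℝ | ∃ v : X, ‖v‖ = 1 ∧ r = ⟪v, D v⟫} := ⟨τs, hDlow⟩
  have hbddDa : BddAbove {r : ℝ | ∃ v : X, ‖v‖ = 1 ∧ r = ⟪v, D v⟫} := ⟨τz, hDhigh⟩
  refine ⟨?_, ?_, ?_⟩
  · calc sInf {r : ℝ | ∃ v : X, ‖v‖ = 1 ∧ r = ⟪v, H v⟫} ≤ τs :=
          csInf_le hbddHb hτs_mem
      _ ≤ sInf {r : ℝ | ∃ v : X, ‖v‖ = 1 ∧ r = ⟪v, D v⟫} := le_csInf hDne hDlow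
  · exact csInf_le_csSup hDne hbddDb hbddDa
  · calc sSup {r : ℝ | ∃ v : X, ‖v‖ = 1 ∧ r = ⟪v, D v⟫} ≤ τz :=
          csSup_le hDne hDhigh
      _ ≤ rz := hrz
      _ ≤ sSup {r : ℝ | ∃ v : X, ‖v‖ = 1 ∧ r = ⟪v, H v⟫} := le_csSup hbddH hrz_mem
end

section
/- Let B₀ ∈ L(X) be symmetric positive definite on a real Hilbert space X and let (s, y) ∈ X × X satisfy yᵀs > 0 and sᵀB₀s > 0. Then the BFGS update B₁ := B₀ + (y yᵀ)/(yᵀs) − (B₀ s sᵀ B₀)/(sᵀ B₀ s) is symmetric positive definite. -/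
open RealInnerProductSpace

theorem stmt19 {X : Type*} [NormedAddCommGroup X] [InnerProductSpace ℝ X]
    (B₀ : X →L[ℝ] X)
    (hsym : ∀ u v : X, ⟪B₀ u, v⟫ = ⟪u, B₀ v⟫)
    (hpd : ∀ v : X, v ≠ 0 → 0 < ⟪v, B₀ v⟫)
    (s y : X) (hys : 0 < ⟪y, s⟫) (hsB : 0 < ⟪s, B₀ s⟫)
    (B₁ : X → X)
    (hB₁ : ∀ v : X, B₁ v = B₀ v + (⟪y, v⟫ / ⟪y, s⟫) • y -
      (⟪B₀ s, v⟫ / ⟪s, B₀ s⟫) • (B₀ s)) :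
    (∀ u v : X, ⟪B₁ u, v⟫ = ⟪u, B₁ v⟫) ∧
      ∀ v : X, v ≠ 0 → 0 < ⟪v, B₁ v⟫ := by
  have expand : ∀ u v : X, ⟪B₁ u, v⟫ = ⟪B₀ u, v⟫ + (⟪y, u⟫ / ⟪y, s⟫) * ⟪y, v⟫ -
      (⟪B₀ s, u⟫ / ⟪s, B₀ s⟫) * ⟪B₀ s, v⟫ := by
    intro u v
    rw [hB₁, inner_sub_left, inner_add_left, real_inner_smul_left, real_inner_smul_left]
  constructor
  · intro u v
    rw [expand u v, ← real_inner_comm u (B₁ v), expand v u, hsym u v,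
      real_inner_comm u (B₀ v)]
    ring
  · intro v hv
    set a := ⟪s, B₀ s⟫ with ha
    set b := ⟪B₀ s, v⟫ with hb
    have hq : ⟪v, B₁ v⟫ = ⟪v, B₀ v⟫ + ⟪y, v⟫ ^ 2 / ⟪y, s⟫ - b ^ 2 / a := by
      rw [← real_inner_comm v (B₁ v), expand v v, hsym v v]
      ring
    have hvs : ⟪v, B₀ s⟫ = b := real_inner_comm (B₀ s) v
    have hsv : ⟪s, B₀ v⟫ = b := (hsym s v).symm
    set w := v - (b / a) • s with hw
    have hwexp : ⟪w, B₀ w⟫ = ⟪v, B₀ v⟫ - b ^ 2 / a := by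
      simp only [hw, inner_sub_left, inner_sub_right, map_sub, map_smul,
        real_inner_smul_left, real_inner_smul_right, hvs, hsv, ← ha]
      field_simp
      ring
    rw [hq]
    rcases eq_or_ne w 0 with h0 | h0
    · have hv' : v = (b / a) • s := sub_eq_zero.mp h0
      have hbne : b ≠ 0 := by
        intro hb0
        exact hv (by rw [hv', hb0, zero_div, zero_smul])
      have hcv : ⟪v, B₀ v⟫ - b ^ 2 / a = 0 := by
        have h := hwexp
        rw [h0, inner_zero_left] at h
        linarith
      have hyv : ⟪y, v⟫ = (b / a) * ⟪y, s⟫ := by rw [hv', real_inner_smul_right]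
      have hpos : 0 < ⟪y, v⟫ ^ 2 / ⟪y, s⟫ := by
        apply div_pos _ hys
        have hne : ⟪y, v⟫ ≠ 0 := by
          rw [hyv]
          exact mul_ne_zero (div_ne_zero hbne (ne_of_gt hsB)) (ne_of_gt hys)
        positivity
      linarith
    · have h1 : 0 < ⟪w, B₀ w⟫ := hpd w h0
      have h2 : 0 ≤ ⟪y, v⟫ ^ 2 / ⟪y, s⟫ := div_nonneg (sq_nonneg _) hys.le
      linarith [hwexp ▸ h1]
end
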